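/- arXiv:2005.07402 — 2 statements merged into one kernel-verified Lean document; each statement's English description precedes it below -/
import Mathlib

section
/- Let X and Y be measurable spaces, let κ be a Markov kernel from X to Y, let μ₁ and ν₁ be probability measures on X with μ₁ ≪ ν₁ and KL(μ₁‖ν₁) < ∞, let 0 ≤ a < b < ∞, and let L : X × Y → ℝ be a measurable function with a ≤ L ≤ b. Then ∫ L d(μ₁ ⊗ κ) − ∫ L d(ν₁ ⊗ κ) ≤ KL(μ₁ ‖ ν₁) + 2·log((e^a + e^b)/2) − a − b. -/
open MeasureTheory ProbabilityTheory Real Classical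
open scoped ProbabilityTheory

/-! Integrating out `κ` reduces both expected losses to integrals of the marginal loss
`f x = ∫ L(x, y) dκ(x)`, which takes values in `[a, b]`. The Donsker–Varadhan inequality gives
`∫ f dμ₁ ≤ KL(μ₁‖ν₁) + log ∫ e^f dν₁`, and for a variable with values in `[a, b]` the convexity
bound `e^f + e^(a+b-f) ≤ e^a + e^b`, Jensen's inequality for `e^(a+b-f)` and AM–GM give
`log ∫ e^f dν₁ - ∫ f dν₁ ≤ 2 log((e^a + e^b)/2) - a - b`. -/

/-- The Kullback--Leibler divergence `KL(μ‖ν) = ∫ log (dμ/dν) dμ`, taking the value `⊤`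
unless `μ ≪ ν` and the log-likelihood ratio is integrable. -/
noncomputable def klDiv {Ω : Type*} [MeasurableSpace Ω] (μ ν : Measure Ω) : EReal :=
  if μ ≪ ν ∧ Integrable (llr μ ν) μ then ((∫ ω, llr μ ν ω ∂μ : ℝ) : EReal) else ⊤

section KL

variable {Ω : Type*} [MeasurableSpace Ω] {μ ν : Measure Ω}

lemma klDiv_lt_top_iff : klDiv μ ν < ⊤ ↔ μ ≪ ν ∧ Integrable (llr μ ν) μ := by
  unfold klDiv
  split_ifs with h <;> simp [h]

lemma toReal_klDiv (hμν : μ ≪ ν) (hllr : Integrable (llr μ ν) μ) :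
    (klDiv μ ν).toReal = ∫ x, llr μ ν x ∂μ := by
  rw [klDiv, if_pos ⟨hμν, hllr⟩, EReal.toReal_coe]

/-- Donsker–Varadhan: Gibbs' inequality for `μ` against the tilted measure `ν.tilted f`. -/
lemma integral_sub_log_integral_exp_le_integral_llr [IsProbabilityMeasure μ] [IsFiniteMeasure ν]
    (hμν : μ ≪ ν) (hllr : Integrable (llr μ ν) μ) {f : Ω → ℝ} (hfμ : Integrable f μ)
    (hfν : Integrable (fun x ↦ exp (f x)) ν) :
    ∫ x, f x ∂μ - log (∫ x, exp (f x) ∂ν) ≤ ∫ x, llr μ ν x ∂μ := by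
  have : NeZero ν :=
    ⟨fun h ↦ IsProbabilityMeasure.ne_zero μ (Measure.measure_univ_eq_zero.mp (hμν (by simp [h])))⟩
  have := isProbabilityMeasure_tilted hfν
  have hgibbs := InformationTheory.integral_llr_add_sub_measure_univ_nonneg
    (hμν.trans (absolutelyContinuous_tilted hfν))
    (integrable_llr_tilted_right hμν hfμ hllr hfν)
  rw [integral_llr_tilted_right hμν hfμ hfν hllr] at hgibbs
  simp only [probReal_univ] at hgibbs
  linarith

end KL

lemma exp_add_exp_sub_le_exp_add_exp {a b x : ℝ} (hax : a ≤ x) (hxb : x ≤ b) :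
    exp x + exp (a + b - x) ≤ exp a + exp b := by
  have hx := exp_pos x
  have hgap : exp a + exp b - (exp x + exp (a + b - x))
      = (exp x - exp a) * (exp b - exp x) / exp x := by
    rw [exp_sub, exp_add]
    field_simp
    ring
  have hfactor : 0 ≤ (exp x - exp a) * (exp b - exp x) :=
    mul_nonneg (sub_nonneg.mpr (exp_le_exp.mpr hax)) (sub_nonneg.mpr (exp_le_exp.mpr hxb))
  linarith [div_nonneg hfactor hx.le]

lemma log_add_log_le_two_mul_log_half {x y s : ℝ} (hx : 0 < x) (hy : 0 < y) (hs : x + y ≤ s) :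
    log x + log y ≤ 2 * log (s / 2) := by
  have hxy : x * y ≤ (s / 2) ^ 2 := by nlinarith [sq_nonneg (x - y)]
  calc log x + log y = log (x * y) := (log_mul hx.ne' hy.ne').symm
    _ ≤ log ((s / 2) ^ 2) := log_le_log (mul_pos hx hy) hxy
    _ = 2 * log (s / 2) := by rw [log_pow]; norm_num

section Bounded

variable {Ω : Type*} [MeasurableSpace Ω] {μ : Measure Ω} {f : Ω → ℝ} {a b : ℝ}

lemma integrable_exp_of_mem_Icc [IsFiniteMeasure μ] (hf : AEMeasurable f μ)
    (hab : ∀ᵐ x ∂μ, f x ∈ Set.Icc a b) : Integrable (fun x ↦ exp (f x)) μ :=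
  .of_mem_Icc (exp a) (exp b) (measurable_exp.comp_aemeasurable hf)
    (hab.mono fun _ hx ↦ ⟨exp_le_exp.mpr hx.1, exp_le_exp.mpr hx.2⟩)

lemma integral_mem_Icc [IsProbabilityMeasure μ] (hf : AEMeasurable f μ)
    (hab : ∀ᵐ x ∂μ, f x ∈ Set.Icc a b) : ∫ x, f x ∂μ ∈ Set.Icc a b :=
  (convex_Icc a b).integral_mem isClosed_Icc hab (Integrable.of_mem_Icc a b hf hab)

lemma log_integral_exp_le_integral_add [IsProbabilityMeasure μ] (hf : AEMeasurable f μ)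
    (hab : ∀ᵐ x ∂μ, f x ∈ Set.Icc a b) :
    log (∫ x, exp (f x) ∂μ) ≤ ∫ x, f x ∂μ + 2 * log ((exp a + exp b) / 2) - a - b := by
  have hf_int : Integrable f μ := .of_mem_Icc a b hf hab
  have hexp_int := integrable_exp_of_mem_Icc hf hab
  have hrefl_ab : ∀ᵐ x ∂μ, a + b - f x ∈ Set.Icc a b :=
    hab.mono fun _ hx ↦ ⟨by linarith [hx.2], by linarith [hx.1]⟩
  have hrefl_int := integrable_exp_of_mem_Icc (hf.const_sub (a + b)) hrefl_ab
  have hsum : ∫ x, exp (f x) ∂μ + ∫ x, exp (a + b - f x) ∂μ ≤ exp a + exp b :=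
    calc ∫ x, exp (f x) ∂μ + ∫ x, exp (a + b - f x) ∂μ
        = ∫ x, (exp (f x) + exp (a + b - f x)) ∂μ :=
          (integral_add hexp_int hrefl_int).symm
      _ ≤ ∫ _, (exp a + exp b) ∂μ :=
          integral_mono_ae (hexp_int.add hrefl_int) (integrable_const _)
            (hab.mono fun _ hx ↦ exp_add_exp_sub_le_exp_add_exp hx.1 hx.2)
      _ = exp a + exp b := by simp
  have hjensen : exp (a + b - ∫ x, f x ∂μ) ≤ ∫ x, exp (a + b - f x) ∂μ := by
    have := convexOn_exp.map_integral_le continuous_exp.continuousOn isClosed_univ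
      (ae_of_all μ fun x ↦ Set.mem_univ (a + b - f x))
      ((integrable_const (a + b)).sub hf_int) hrefl_int
    rwa [integral_sub (integrable_const _) hf_int, integral_const, probReal_univ, one_smul]
      at this
  have hamgm := log_add_log_le_two_mul_log_half (integral_exp_pos hexp_int)
    (exp_pos (a + b - ∫ x, f x ∂μ)) (s := exp a + exp b) (by linarith)
  rw [log_exp] at hamgm
  linarith

end Bounded

theorem expected_loss_diff_compProd_le_klDiv_add_const_general
    {X Y : Type*} [MeasurableSpace X] [MeasurableSpace Y]
    (κ : Kernel X Y) [IsMarkovKernel κ]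
    (μ₁ ν₁ : Measure X) [IsProbabilityMeasure μ₁] [IsProbabilityMeasure ν₁]
    (hfin : klDiv μ₁ ν₁ < ⊤)
    (a b : ℝ)
    (L : X × Y → ℝ) (hL : Measurable L) (hLa : ∀ p, a ≤ L p) (hLb : ∀ p, L p ≤ b) :
    ∫ p, L p ∂(μ₁ ⊗ₘ κ) - ∫ p, L p ∂(ν₁ ⊗ₘ κ) ≤
      (klDiv μ₁ ν₁).toReal + 2 * Real.log ((Real.exp a + Real.exp b) / 2) - a - b := by
  obtain ⟨hac, hllr⟩ := klDiv_lt_top_iff.mp hfin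
  have hLab : ∀ p, L p ∈ Set.Icc a b := fun p ↦ ⟨hLa p, hLb p⟩
  set f : X → ℝ := fun x ↦ ∫ y, L (x, y) ∂κ x
  have hf : Measurable f := hL.stronglyMeasurable.integral_kernel_prod_right'.measurable
  have hfab : ∀ x, f x ∈ Set.Icc a b := fun x ↦
    integral_mem_Icc (hL.comp measurable_prodMk_left).aemeasurable (ae_of_all _ (hLab ⟨x, ·⟩))
  have hf_int : Integrable f μ₁ := .of_mem_Icc a b hf.aemeasurable (ae_of_all _ hfab)
  have hexpf_int := integrable_exp_of_mem_Icc hf.aemeasurable (ae_of_all ν₁ hfab)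
  have hL_int (ρ : Measure X) [IsProbabilityMeasure ρ] : Integrable L (ρ ⊗ₘ κ) :=
    .of_mem_Icc a b hL.aemeasurable (ae_of_all _ hLab)
  rw [Measure.integral_compProd (hL_int μ₁), Measure.integral_compProd (hL_int ν₁),
    toReal_klDiv hac hllr]
  have hDV := integral_sub_log_integral_exp_le_integral_llr hac hllr hf_int hexpf_int
  have hmgf := log_integral_exp_le_integral_add hf.aemeasurable (ae_of_all ν₁ hfab)
  linarith

/-- **Corollary 1 of the paper in abstract form.** For a Markov kernel `κ` from `X` to `Y`,
probability measures `μ₁ ≪ ν₁` on `X` with finite KL divergence, and a measurable loss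
`L : X × Y → ℝ` with values in `[a, b]`, `0 ≤ a < b`, the difference of the expected losses
under the composition-products is bounded by `KL(μ₁‖ν₁) + 2 log((eᵃ + eᵇ)/2) − a − b`. -/
theorem expected_loss_diff_compProd_le_klDiv_add_const
    {X Y : Type*} [MeasurableSpace X] [MeasurableSpace Y]
    (κ : Kernel X Y) [IsMarkovKernel κ]
    (μ₁ ν₁ : Measure X) [IsProbabilityMeasure μ₁] [IsProbabilityMeasure ν₁]
    (hac : μ₁ ≪ ν₁) (hfin : klDiv μ₁ ν₁ < ⊤)
    (a b : ℝ) (ha : 0 ≤ a) (hab : a < b)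
    (L : X × Y → ℝ) (hL : Measurable L) (hLa : ∀ p, a ≤ L p) (hLb : ∀ p, L p ≤ b) :
    ∫ p, L p ∂(μ₁ ⊗ₘ κ) - ∫ p, L p ∂(ν₁ ⊗ₘ κ) ≤
      (klDiv μ₁ ν₁).toReal + 2 * Real.log ((Real.exp a + Real.exp b) / 2) - a - b :=
  expected_loss_diff_compProd_le_klDiv_add_const_general κ μ₁ ν₁ hfin a b L hL hLa hLb
end

section
/- Let t₀ ≥ 1 and t₁ ≥ 1 be natural numbers and T = t₀ + t₁. For any natural number k with 1 ≤ k, the number of sequences s : Fin T → Bool having exactly t₀ entries equal to false and t₁ entries equal to true and whose number of runs U(s) equals 2k + 1 is C(t₀ − 1, k)·C(t₁ − 1, k − 1) + C(t₀ − 1, k − 1)·C(t₁ − 1, k), where C(n, r) denotes the binomial coefficient. -/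
/-- The number of runs of a finite boolean sequence `s : Fin T → Bool`:
one plus the number of adjacent positions at which the value changes. -/
def numRuns {T : ℕ} (s : Fin T → Bool) : ℕ :=
  1 + (Finset.univ.filter
        (fun p : Fin T × Fin T => (p.1 : ℕ) + 1 = (p.2 : ℕ) ∧ s p.1 ≠ s p.2)).card

/-!
A sequence that starts with `false` and has `r` runs alternates `⌈r/2⌉` runs of `false` with
`⌊r/2⌋` runs of `true`, so it amounts to a composition of `t₀` into `⌈r/2⌉` positive parts and one
of `t₁` into `⌊r/2⌋` parts, and there are `C(n-1, r-1)` compositions of `n` into `r` parts. When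
`r = 2k+1` is odd the two choices of the first value give the two terms of the formula.
We verify the count by induction on the length: deleting the first entry keeps the number of runs
or lowers it by one, which is Pascal's rule for compositions, and flipping every bit exchanges the
roles of `false` and `true`.
-/

open Finset

/-- The number of ways to write `n` as an ordered sum of `r` positive integers. -/
def numCompositions : ℕ → ℕ → ℕ
  | 0, 0 => 1
  | 0, _ + 1 => 0
  | _ + 1, 0 => 0
  | n + 1, r + 1 => numCompositions n r + numCompositions n (r + 1)

@[simp] lemma numCompositions_zero_left (r : ℕ) :
    numCompositions 0 r = if r = 0 then 1 else 0 := by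
  cases r <;> rfl

@[simp] lemma numCompositions_succ_zero (n : ℕ) : numCompositions (n + 1) 0 = 0 := rfl

lemma numCompositions_succ_succ (n r : ℕ) :
    numCompositions (n + 1) (r + 1) = numCompositions n r + numCompositions n (r + 1) := rfl

lemma numCompositions_succ_succ_eq_choose (n r : ℕ) :
    numCompositions (n + 1) (r + 1) = n.choose r := by
  induction n generalizing r with
  | zero => cases r <;> rfl
  | succ n ih =>
    cases r with
    | zero => rw [numCompositions_succ_succ, ih]; simp
    | succ r => rw [numCompositions_succ_succ, ih, ih, Nat.choose_succ_succ]

lemma card_filter_eq_sum_card_filter_apply_zero {α : Type*} [Fintype α] [DecidableEq α] {n : ℕ}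
    (P : (Fin (n + 1) → α) → Prop) [DecidablePred P] :
    #{s | P s} = ∑ c, #{s : Fin (n + 1) → α | s 0 = c ∧ P s} := by
  rw [card_eq_sum_card_fiberwise (f := fun s => s 0) (t := univ) (by simp)]
  simp [filter_filter, and_comm]

lemma card_filter_apply_zero_eq_card_filter_cons {α : Type*} [Fintype α] [DecidableEq α] {n : ℕ}
    (P : (Fin (n + 1) → α) → Prop) [DecidablePred P] (c : α) :
    #{s : Fin (n + 1) → α | s 0 = c ∧ P s} = #{t : Fin n → α | P (Fin.cons c t)} := by
  refine card_nbij' Fin.tail (fun t => Fin.cons c t) ?_ ?_ ?_ ?_ <;>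
    simp only [coe_filter, mem_univ, true_and, Set.MapsTo, Set.LeftInvOn, Set.mem_ofPred_eq]
  · rintro s ⟨rfl, hs⟩
    rwa [Fin.cons_self_tail]
  · simp
  · rintro s ⟨rfl, -⟩
    exact Fin.cons_self_tail s
  · simp

lemma card_filter_cons_apply_eq {α : Type*} [DecidableEq α] {n : ℕ} (c b : α) (t : Fin n → α) :
    #{i | (Fin.cons c t : Fin (n + 1) → α) i = b} = #{i | t i = b} + if c = b then 1 else 0 := by
  rw [card_filter, card_filter, Fin.sum_univ_succ]
  simp [add_comm]

lemma numRuns_eq_one_add_card {n : ℕ} (s : Fin (n + 1) → Bool) :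
    numRuns s = 1 + #{i : Fin n | s i.castSucc ≠ s i.succ} := by
  have hinj : Function.Injective fun i : Fin n => (i.castSucc, i.succ) :=
    fun i j h => Fin.castSucc_injective n (congrArg Prod.fst h)
  rw [numRuns, ← card_image_of_injective _ hinj]
  congr 2
  ext ⟨i, j⟩
  simp only [mem_filter, mem_image, mem_univ, true_and, Prod.mk.injEq]
  constructor
  · rintro ⟨hij, hs⟩
    obtain ⟨k, rfl⟩ : ∃ k : Fin n, k.castSucc = i := ⟨⟨i, by omega⟩, rfl⟩
    obtain rfl : k.succ = j := Fin.ext (by simpa using hij)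
    exact ⟨k, hs, rfl, rfl⟩
  · rintro ⟨k, hk, rfl, rfl⟩
    exact ⟨by simp, hk⟩

lemma numRuns_cons {n : ℕ} (c : Bool) (t : Fin (n + 1) → Bool) :
    numRuns (Fin.cons c t : Fin (n + 2) → Bool) = numRuns t + if c = t 0 then 0 else 1 := by
  rw [numRuns_eq_one_add_card, numRuns_eq_one_add_card, card_filter, card_filter,
    Fin.sum_univ_succ]
  simp
  omega

def runsCount (n a b r : ℕ) (c : Bool) : ℕ :=
  #{s : Fin (n + 1) → Bool | s 0 = c ∧
    #{i | s i = false} = a ∧ #{i | s i = true} = b ∧ numRuns s = r}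

lemma numRuns_not {n : ℕ} (s : Fin n → Bool) : numRuns (fun i => !s i) = numRuns s := by
  simp [numRuns]

lemma runsCount_not (n a b r : ℕ) (c : Bool) : runsCount n b a r (!c) = runsCount n a b r c := by
  refine card_nbij' (fun s i => !s i) (fun s i => !s i) ?_ ?_ ?_ ?_ <;>
    simp +contextual [Set.MapsTo, Set.LeftInvOn, numRuns_not]

lemma runsCount_zero_runs (n a b : ℕ) (c : Bool) : runsCount n a b 0 c = 0 := by
  simp [runsCount, numRuns]

lemma runsCount_zero_falses (n b r : ℕ) : runsCount n 0 b r false = 0 := by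
  simp only [runsCount, card_eq_zero, filter_eq_empty_iff]
  rintro s - ⟨h0, hfalse, -⟩
  exact hfalse (mem_univ 0) h0

lemma runsCount_zero (a b r : ℕ) :
    runsCount 0 a b r false = if a = 1 ∧ b = 0 ∧ r = 1 then 1 else 0 := by
  rw [runsCount, card_filter_apply_zero_eq_card_filter_cons, card_filter, Fintype.sum_unique]
  simp only [card_filter_cons_apply_eq, numRuns_eq_one_add_card]
  simp
  split_ifs <;> omega

lemma runsCount_succ (n a b r : ℕ) :
    runsCount (n + 1) (a + 1) b (r + 1) false
      = runsCount n a b (r + 1) false + runsCount n a b r true := by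
  rw [runsCount, card_filter_apply_zero_eq_card_filter_cons]
  simp only [card_filter_cons_apply_eq, numRuns_cons]
  rw [card_filter_eq_sum_card_filter_apply_zero, Fintype.sum_bool]
  simp only [runsCount]
  rw [add_comm]
  congr 1 <;> refine congrArg card (filter_congr fun s _ => ?_) <;> simp +contextual

theorem runsCount_false_eq : ∀ (n a b r : ℕ), a + b = n + 1 →
    runsCount n a b r false = numCompositions a ((r + 1) / 2) * numCompositions b (r / 2)
  | n, a, b, 0, h => by
    rw [runsCount_zero_runs]
    rcases a with _ | a <;> rcases b with _ | b <;> simp_all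
  | n, 0, b, r + 1, _ => by
    rw [runsCount_zero_falses, show (r + 1 + 1) / 2 = r / 2 + 1 by omega]
    simp
  | 0, a + 1, b, r + 1, h => by
    obtain ⟨rfl, rfl⟩ : a = 0 ∧ b = 0 := by omega
    rw [runsCount_zero, show (r + 1 + 1) / 2 = r / 2 + 1 by omega,
      numCompositions_succ_succ_eq_choose]
    rcases r with _ | r <;> simp
  | n + 1, a + 1, b, r + 1, h => by
    have hflip : runsCount n a b r true = runsCount n b a r false := runsCount_not n b a r false
    rw [runsCount_succ, hflip, runsCount_false_eq n a b (r + 1) (by omega),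
      runsCount_false_eq n b a r (by omega), show (r + 1 + 1) / 2 = r / 2 + 1 by omega,
      numCompositions_succ_succ]
    ring

lemma card_filter_runs_eq (n a b r : ℕ) :
    #{s : Fin (n + 1) → Bool | #{i | s i = false} = a ∧ #{i | s i = true} = b ∧ numRuns s = r}
      = runsCount n a b r false + runsCount n b a r false := by
  rw [card_filter_eq_sum_card_filter_apply_zero, Fintype.sum_bool, add_comm,
    ← runsCount_not n b a r false]
  rfl

/-- **Combinatorial count for the Wald–Wolfowitz runs test (odd case, Section 4.1 of the
paper).** The number of boolean sequences of length `T = t₀ + t₁` with exactly `t₀` entries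
`false` and `t₁` entries `true` having exactly `2k + 1` runs is
`C(t₀−1, k) · C(t₁−1, k−1) + C(t₀−1, k−1) · C(t₁−1, k)`. -/
theorem card_sequences_with_odd_runs (t₀ t₁ : ℕ) (h₀ : 1 ≤ t₀) (h₁ : 1 ≤ t₁)
    (k : ℕ) (hk : 1 ≤ k) :
    (Finset.univ.filter (fun s : Fin (t₀ + t₁) → Bool =>
        (Finset.univ.filter (fun i => s i = false)).card = t₀ ∧
        (Finset.univ.filter (fun i => s i = true)).card = t₁ ∧
        numRuns s = 2 * k + 1)).card =
      Nat.choose (t₀ - 1) k * Nat.choose (t₁ - 1) (k - 1)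
        + Nat.choose (t₀ - 1) (k - 1) * Nat.choose (t₁ - 1) k := by
  obtain ⟨a, rfl⟩ : ∃ a, t₀ = a + 1 := ⟨t₀ - 1, by omega⟩
  obtain ⟨b, rfl⟩ : ∃ b, t₁ = b + 1 := ⟨t₁ - 1, by omega⟩
  obtain ⟨j, rfl⟩ : ∃ j, k = j + 1 := ⟨k - 1, by omega⟩
  refine (card_filter_runs_eq (a + 1 + b) _ _ _).trans ?_
  rw [runsCount_false_eq _ _ _ _ (by omega), runsCount_false_eq _ _ _ _ (by omega),
    show (2 * (j + 1) + 1 + 1) / 2 = j + 2 by omega,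
    show (2 * (j + 1) + 1) / 2 = j + 1 by omega]
  simp only [numCompositions_succ_succ_eq_choose, Nat.add_sub_cancel]
  ring
end
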